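/- For every integer n ≥ 1, -C_{n-1} / (3 · 2^{2n-2} · (5/2)_{2n-2}) = (1 / (2^{2n} (1/2)_{2n})) · ( 2n · ((-1)^n (1/2)_n / n!) + Σ_{j=1}^{n-1} (C_{j-1} / (3 · 2^{2j-2} (5/2)_{2j-2})) · ((-1)^{n-j} (1/2)_{n+j} 2^{2j} / (n-j)!) ), where C_j denotes the j-th Catalan number and (a)_k the rising factorial. -/

import Mathlib

/-!
Since `3 · 4^(j-1) · (5/2)_(2j-2) = 4^j · (1/2)_(2j)`, clearing the denominator `4^n (1/2)_(2n)`
turns the identity into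
  `∑_{j=1}^{n} (-1)^j C_(j-1) (2j+1/2)_(n-j) / (n-j)! = -2n (1/2)_n / n!`.
Both sides satisfy the inhomogeneous recurrence
  `-2(2n+1) f(n) - 10 f(n+1) + 4(n+2) f(n+2) = -G(n,1)`
and agree at `n = 1, 2`. For the sum this is creative telescoping: with the Zeilberger certificate
`G(n,j) = -j(4j-1)(4j-3) / ((n+2-j)(n+1-j)) · T(n,j)` (`certificate`), the recurrence
operator applied to the summand `T(n,j)` (`term`) equals `G(n,j+1) - G(n,j)` for `1 ≤ j < n`,
and the boundary terms at `j = n, n+1, n+2` cancel `G(n,n)`.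
-/

/-- Rising factorial (Pochhammer symbol) over ℚ. -/
noncomputable def rf (a : ℚ) (k : ℕ) : ℚ := (ascPochhammer ℚ k).eval a

open Finset

lemma rf_zero (a : ℚ) : rf a 0 = 1 := by simp [rf]

lemma rf_succ (a : ℚ) (k : ℕ) : rf a (k + 1) = rf a k * (a + k) := by
  simp [rf, ascPochhammer_succ_right]

lemma rf_add (a : ℚ) (p q : ℕ) : rf a (p + q) = rf a p * rf (a + p) q := by
  simpa [rf, Polynomial.eval_comp] using
    (congrArg (Polynomial.eval a) (ascPochhammer_mul ℚ p q)).symm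

lemma rf_pos {a : ℚ} (h : 0 < a) (k : ℕ) : 0 < rf a k := ascPochhammer_pos k a h

lemma rf_two (a : ℚ) : rf a 2 = a * (a + 1) := by
  simp [rf, ascPochhammer_succ_right]

lemma rf_five_halves (k : ℕ) : rf (5/2) k = 4/3 * rf (1/2) (k + 2) := by
  rw [add_comm, rf_add, rf_two]; norm_num; ring

lemma three_mul_rf_five_halves {j : ℕ} (hj : 1 ≤ j) :
    (3 : ℚ) * 2 ^ (2 * j - 2) * rf (5/2) (2 * j - 2) = 2 ^ (2 * j) * rf (1/2) (2 * j) := by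
  obtain ⟨l, rfl⟩ : ∃ l, j = l + 1 := ⟨j - 1, by omega⟩
  rw [show 2 * (l + 1) - 2 = 2 * l by omega, show 2 * (l + 1) = 2 * l + 2 by omega,
    rf_five_halves, pow_add]
  ring

lemma neg_one_pow_sq (n : ℕ) : ((-1 : ℚ) ^ n) ^ 2 = 1 := by
  rw [pow_right_comm, neg_one_sq, one_pow]

lemma cast_catalan_succ (i : ℕ) :
    (catalan (i + 1) : ℚ) = 2 * (2 * i + 1) * catalan i / (i + 2) := by
  have h := congrArg (fun m : ℕ => (m : ℚ)) (succ_mul_catalan_eq_centralBinom (i + 1))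
  have h' := congrArg (fun m : ℕ => (m : ℚ)) (succ_mul_catalan_eq_centralBinom i)
  have hc := congrArg (fun m : ℕ => (m : ℚ)) (Nat.succ_mul_centralBinom_succ i)
  push_cast at h h' hc
  have key : ((i : ℚ) + 1) * ((i + 2) * catalan (i + 1))
      = (i + 1) * (2 * (2 * i + 1) * catalan i) := by
    linear_combination (↑i + 1) * h + hc - 2 * (2 * (i : ℚ) + 1) * h'
  rw [eq_div_iff (by positivity), mul_comm]
  exact mul_left_cancel₀ (by positivity) key

namespace CatalanSum

noncomputable def term (n j : ℕ) : ℚ :=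
  (-1) ^ j * catalan (j - 1) * rf (2 * j + 1/2) (n - j) / (n - j).factorial

noncomputable def termSum (n : ℕ) : ℚ := ∑ j ∈ Icc 1 n, term n j

noncomputable def closedForm (n : ℕ) : ℚ := -2 * n * rf (1/2) n / n.factorial

def recOp (f : ℕ → ℚ) (n : ℕ) : ℚ :=
  -2 * (2 * n + 1) * f n - 10 * f (n + 1) + 4 * (n + 2) * f (n + 2)

noncomputable def certificate (n j : ℕ) : ℚ :=
  -(j * (4 * j - 1) * (4 * j - 3)) *
    ((-1) ^ j * catalan (j - 1) * rf (2 * j + 1/2) (n - j) / (n + 2 - j).factorial)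

lemma eq_of_recOp_eq {f g : ℕ → ℚ} (h₁ : f 1 = g 1) (h₂ : f 2 = g 2)
    (h : ∀ n, recOp f (n + 1) = recOp g (n + 1)) (n : ℕ) : f (n + 1) = g (n + 1) := by
  induction n using Nat.strong_induction_on with
  | _ n ih =>
    match n, ih with
    | 0, _ => exact h₁
    | 1, _ => exact h₂
    | i + 2, ih =>
      have hi := h i
      simp only [recOp, ih i (by omega), ih (i + 1) (by omega)] at hi
      have hne : (4 * (((i + 1 : ℕ) : ℚ) + 2)) ≠ 0 := by positivity
      exact mul_left_cancel₀ hne (by linear_combination hi)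

lemma recOp_closedForm (n : ℕ) : recOp closedForm (n + 1) = -certificate (n + 1) 1 := by
  simp only [recOp, closedForm, certificate, Nat.sub_self, catalan_zero,
    show n + 1 + 2 - 1 = n + 2 by omega, show n + 1 - 1 = n by omega]
  rw [show (2 * ((1 : ℕ) : ℚ) + 1/2) = 5/2 by norm_num, rf_five_halves,
    show n + 1 + 2 = n + 1 + 1 + 1 by omega]
  simp only [rf_succ, Nat.factorial_succ]
  push_cast
  field_simp
  ring

lemma term_telescope {n j : ℕ} (hj : 1 ≤ j) (hjn : j < n) :
    -2 * (2 * n + 1) * term n j - 10 * term (n + 1) j + 4 * (n + 2) * term (n + 2) j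
      = certificate n (j + 1) - certificate n j := by
  obtain ⟨i, rfl⟩ : ∃ i, j = i + 1 := ⟨j - 1, by omega⟩
  obtain ⟨k, rfl⟩ : ∃ k, n = i + 1 + (k + 1) := ⟨n - i - 2, by omega⟩
  simp only [term, certificate, Nat.add_sub_cancel_left, Nat.add_sub_cancel,
    show i + 1 + (k + 1) + 1 - (i + 1) = k + 2 by omega,
    show i + 1 + (k + 1) + 2 - (i + 1) = k + 3 by omega,
    show i + 1 + (k + 1) + 2 - (i + 1 + 1) = k + 2 by omega,
    show i + 1 + (k + 1) - (i + 1 + 1) = k by omega]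
  set A : ℚ := 2 * ((i + 1 : ℕ) : ℚ) + 1/2 with hA
  have hA' : 2 * ((i + 1 + 1 : ℕ) : ℚ) + 1/2 = A + 2 := by push_cast [hA]; ring
  have hApos : 0 < A := by positivity
  have hshift : rf (A + 2) k = rf A (k + 2) / (A * (A + 1)) := by
    rw [eq_div_iff (by positivity), add_comm k, rf_add, rf_two]
    push_cast
    ring
  rw [hA', hshift, cast_catalan_succ]
  simp only [rf_succ, Nat.factorial_succ, pow_succ, hA]
  push_cast
  field_simp
  ring

lemma certificate_add_top_terms (n : ℕ) :
    certificate (n + 1) (n + 1) + (-2 * (2 * ((n + 1 : ℕ) : ℚ) + 1) * term (n + 1) (n + 1)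
      - 10 * (term (n + 2) (n + 1) + term (n + 2) (n + 2))
      + 4 * (((n + 1 : ℕ) : ℚ) + 2) * (term (n + 3) (n + 1) + term (n + 3) (n + 2)
        + term (n + 3) (n + 3))) = 0 := by
  simp only [term, certificate, Nat.sub_self, Nat.add_sub_cancel,
    show n + 1 + 2 - (n + 1) = 2 by omega, show n + 2 - (n + 1) = 1 by omega,
    show n + 3 - (n + 2) = 1 by omega,
    show n + 2 - 1 = n + 1 by omega, show n + 3 - 1 = n + 2 by omega]
  rw [cast_catalan_succ (n + 1), cast_catalan_succ n, rf_two]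
  simp only [rf_zero, rf_succ, Nat.factorial_succ, pow_succ]
  push_cast
  field_simp
  ring

lemma recOp_termSum (n : ℕ) : recOp termSum (n + 1) = -certificate (n + 1) 1 := by
  have interior : ∑ j ∈ Icc 1 n, (-2 * (2 * ((n + 1 : ℕ) : ℚ) + 1) * term (n + 1) j
      - 10 * term (n + 1 + 1) j + 4 * (((n + 1 : ℕ) : ℚ) + 2) * term (n + 1 + 2) j)
        = certificate (n + 1) (n + 1) - certificate (n + 1) 1 := by
    rw [← Ico_add_one_right_eq_Icc,
      ← sum_Ico_sub (f := certificate (n + 1)) (by omega : 1 ≤ n + 1)]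
    refine sum_congr rfl fun j hj => ?_
    rw [mem_Ico] at hj
    exact term_telescope hj.1 (by omega)
  rw [sum_add_distrib, sum_sub_distrib, ← mul_sum, ← mul_sum, ← mul_sum] at interior
  have top := certificate_add_top_terms n
  simp only [recOp, termSum, show n + 1 + 2 = n + 1 + 1 + 1 by omega]
  rw [sum_Icc_succ_top (by omega), sum_Icc_succ_top (by omega), sum_Icc_succ_top (by omega),
    sum_Icc_succ_top (by omega), sum_Icc_succ_top (by omega), sum_Icc_succ_top (by omega)]
  linear_combination interior + top

lemma termSum_eq_closedForm (n : ℕ) : termSum (n + 1) = closedForm (n + 1) := by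
  refine eq_of_recOp_eq ?_ ?_ (fun m => by rw [recOp_termSum, recOp_closedForm]) n
  · norm_num [termSum, term, closedForm, rf_zero, rf_succ]
  · norm_num [termSum, term, closedForm, rf_zero, rf_succ, Icc_self, sum_Icc_succ_top]

lemma term_self (n : ℕ) : term n n = (-1) ^ n * catalan (n - 1) := by
  simp [term, rf_zero]

lemma scaled_term_eq {n j : ℕ} (hj : 1 ≤ j) (hjn : j ≤ n) :
    (catalan (j - 1) : ℚ) / (3 * 2 ^ (2 * j - 2) * rf (5/2) (2 * j - 2)) *
      ((-1) ^ (n - j) * rf (1/2) (n + j) * 2 ^ (2 * j) / (n - j).factorial)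
      = (-1) ^ n * term n j := by
  obtain ⟨k, rfl⟩ : ∃ k, n = j + k := ⟨n - j, by omega⟩
  have hpos : 0 < rf (1/2) (2 * j) := rf_pos (by norm_num) _
  rw [three_mul_rf_five_halves hj, show j + k + j = 2 * j + k by omega, rf_add,
    show (1/2 : ℚ) + ((2 * j : ℕ) : ℚ) = 2 * j + 1/2 by push_cast; ring]
  simp only [term, Nat.add_sub_cancel_left, pow_add]
  field_simp
  rw [neg_one_pow_sq, mul_one]

end CatalanSum

theorem stmt_6 (n : ℕ) (hn : 1 ≤ n) :
    -((catalan (n - 1) : ℚ) / (3 * 2 ^ (2 * n - 2) * rf (5/2) (2 * n - 2)))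
      = (1 / (2 ^ (2 * n) * rf (1/2) (2 * n))) *
        (2 * n * ((-1 : ℚ) ^ n * rf (1/2) n / (n.factorial : ℚ)) +
          ∑ j ∈ Finset.Icc 1 (n - 1),
            ((catalan (j - 1) : ℚ) / (3 * 2 ^ (2 * j - 2) * rf (5/2) (2 * j - 2))) *
              ((-1 : ℚ) ^ (n - j) * rf (1/2) (n + j) * 2 ^ (2 * j) /
                ((n - j).factorial : ℚ))) := by
  obtain ⟨m, rfl⟩ : ∃ m, n = m + 1 := ⟨n - 1, by omega⟩
  rw [Nat.add_sub_cancel, three_mul_rf_five_halves hn,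
    sum_congr rfl fun j hj => CatalanSum.scaled_term_eq (mem_Icc.1 hj).1 (by grind), ← mul_sum]
  have hsum : ∑ j ∈ Icc 1 m, CatalanSum.term (m + 1) j
      = CatalanSum.closedForm (m + 1) - (-1) ^ (m + 1) * catalan m := by
    rw [← CatalanSum.termSum_eq_closedForm, CatalanSum.termSum, sum_Icc_succ_top (by omega),
      CatalanSum.term_self, Nat.add_sub_cancel]
    ring
  have hpos : 0 < rf (1/2) (2 * (m + 1)) := rf_pos (by norm_num) _
  rw [hsum, CatalanSum.closedForm]
  have hfac : ((m + 1).factorial : ℚ) ≠ 0 := by positivity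
  field_simp
  linear_combination (catalan m * (m + 1).factorial : ℚ) * neg_one_pow_sq (m + 1)
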